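/- Let Λ be a numerical semigroup with elements λ_0 = 0 < λ_1 < λ_2 < ⋯, conductor c = λ_L, and let λ_s be a right primitive element of Λ with s − 1 ≥ L. Set Λ̃ = Λ ∖ {λ_s}. Then the order-(s−1) seeds of Λ̃ are exactly λ_s + 1 and λ_s + 2. -/

import Mathlib

/-- A numerical semigroup: a cofinite additive submonoid of ℕ. -/
structure NumericalSemigroup where
  carrier : Set ℕ
  zero_mem : 0 ∈ carrier
  add_mem : ∀ a b : ℕ, a ∈ carrier → b ∈ carrier → a + b ∈ carrier
  cofinite : (carrierᶜ : Set ℕ).Finite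

namespace NumericalSemigroup

/-- The genus: the number of gaps (elements of ℕ not in the semigroup). -/
noncomputable def genus (Λ : NumericalSemigroup) : ℕ := Λ.carrierᶜ.ncard

/-- The conductor: the least `c` such that every `n ≥ c` belongs to the semigroup
(equivalently, one plus the largest gap). -/
noncomputable def conductor (Λ : NumericalSemigroup) : ℕ := sInf {c | ∀ n, c ≤ n → n ∈ Λ.carrier}

/-- The multiplicity: the smallest nonzero element. -/
noncomputable def multiplicity (Λ : NumericalSemigroup) : ℕ := sInf {x | x ∈ Λ.carrier ∧ x ≠ 0}

/-- The increasing enumeration `λ_0 = 0 < λ_1 < λ_2 < ⋯` of the elements. -/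
noncomputable def el (Λ : NumericalSemigroup) (i : ℕ) : ℕ := Nat.nth (fun n => n ∈ Λ.carrier) i

/-- `L`: the number of elements smaller than the conductor (the left elements). -/
noncomputable def leftCount (Λ : NumericalSemigroup) : ℕ := {x ∈ Λ.carrier | x < Λ.conductor}.ncard

/-- A primitive element (minimal generator): a nonzero element that is not a sum of
two nonzero elements of the semigroup. -/
noncomputable def IsPrimitive (Λ : NumericalSemigroup) (x : ℕ) : Prop :=
  x ∈ Λ.carrier ∧ x ≠ 0 ∧
    ¬ ∃ a b : ℕ, a ∈ Λ.carrier ∧ b ∈ Λ.carrier ∧ a ≠ 0 ∧ b ≠ 0 ∧ a + b = x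

/-- The set of primitive elements. -/
noncomputable def primitives (Λ : NumericalSemigroup) : Set ℕ := {x | Λ.IsPrimitive x}

/-- A right primitive element: a primitive element ≥ the conductor. -/
noncomputable def IsRightPrimitive (Λ : NumericalSemigroup) (x : ℕ) : Prop :=
  Λ.IsPrimitive x ∧ Λ.conductor ≤ x

/-- An element `x = λ_s ≥ c` is an order-`i` seed when
`λ_s + λ_i ≠ λ_j + λ_k` for all `i < j ≤ k < s`
(the condition `k < s` is expressed as `λ_k < x`). -/
noncomputable def IsSeed (Λ : NumericalSemigroup) (i x : ℕ) : Prop :=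
  x ∈ Λ.carrier ∧ Λ.conductor ≤ x ∧
    ∀ j k : ℕ, i < j → j ≤ k → Λ.el k < x → x + Λ.el i ≠ Λ.el j + Λ.el k

/-- `q = ⌈c/m⌉`. -/
noncomputable def q (Λ : NumericalSemigroup) : ℕ :=
  (Λ.conductor + Λ.multiplicity - 1) / Λ.multiplicity

/-- `ρ = q·m − c`. -/
noncomputable def rho (Λ : NumericalSemigroup) : ℕ := Λ.q * Λ.multiplicity - Λ.conductor

/-- The Eliahou constant
`E(Λ) = #(P ∩ {x < c})·L − q·(m − #(P ∩ {x ≥ c})) + ρ`. -/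
noncomputable def eliahou (Λ : NumericalSemigroup) : ℤ :=
  ({x ∈ Λ.primitives | x < Λ.conductor}.ncard : ℤ) * (Λ.leftCount : ℤ)
    - (Λ.q : ℤ) * ((Λ.multiplicity : ℤ) - ({x ∈ Λ.primitives | Λ.conductor ≤ x}.ncard : ℤ))
    + (Λ.rho : ℤ)

/-- `Λ = ⟨a,b,c⟩|_κ`: `Λ` is the smallest numerical semigroup containing
`a`, `b`, `c` and every integer `≥ κ`. -/
noncomputable def IsSmallestContaining (Λ : NumericalSemigroup) (a b c κ : ℕ) : Prop :=
  a ∈ Λ.carrier ∧ b ∈ Λ.carrier ∧ c ∈ Λ.carrier ∧ (∀ n, κ ≤ n → n ∈ Λ.carrier) ∧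
    ∀ M : NumericalSemigroup,
      a ∈ M.carrier → b ∈ M.carrier → c ∈ M.carrier → (∀ n, κ ≤ n → n ∈ M.carrier) →
        Λ.carrier ⊆ M.carrier

end NumericalSemigroup

/-!
Since `L ≤ s - 1`, both `λ_{s-1}` and `λ_s` lie at or beyond the conductor, so
`λ_{s-1} = λ_s - 1`; in `Λ̃` the element `λ_s - 1` keeps index `s - 1`, and the next element
`λ_s + 1` is the conductor of `Λ̃`. Whenever `λ_{i+1} = c`, the sums `λ_j + λ_k` with
`i < j ≤ k` are exactly the integers `≥ 2c`, so the order-`i` seeds are the `x` with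
`c ≤ x < 2c - λ_i`; for `Λ̃` and `i = s - 1` this is `λ_s + 1 ≤ x < λ_s + 3`.
-/

open scoped Classical

namespace NumericalSemigroup

section Enumeration

variable (Λ : NumericalSemigroup)

theorem carrier_infinite : Λ.carrier.Infinite := by
  simpa using Λ.cofinite.infinite_compl

theorem mem_of_conductor_le {n : ℕ} (h : Λ.conductor ≤ n) : n ∈ Λ.carrier := by
  have hne : {c | ∀ n, c ≤ n → n ∈ Λ.carrier}.Nonempty := by
    obtain ⟨m, hm⟩ := Λ.cofinite.bddAbove
    exact ⟨m + 1, fun n hn => by_contra fun hn' => absurd (hm hn') (by omega)⟩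
  exact Nat.sInf_mem hne n h

theorem conductor_le_of_forall {a : ℕ} (h : ∀ n, a ≤ n → n ∈ Λ.carrier) : Λ.conductor ≤ a :=
  Nat.sInf_le h

theorem el_mem (i : ℕ) : Λ.el i ∈ Λ.carrier :=
  Nat.nth_mem_of_infinite Λ.carrier_infinite i

theorem el_le_el {i j : ℕ} : Λ.el i ≤ Λ.el j ↔ i ≤ j :=
  Nat.nth_le_nth Λ.carrier_infinite

theorem el_lt_el {i j : ℕ} : Λ.el i < Λ.el j ↔ i < j :=
  Nat.nth_lt_nth Λ.carrier_infinite

theorem count_el (i : ℕ) : Nat.count (· ∈ Λ.carrier) (Λ.el i) = i :=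
  Nat.count_nth_of_infinite (p := (· ∈ Λ.carrier)) Λ.carrier_infinite i

theorem exists_el_eq {x : ℕ} (hx : x ∈ Λ.carrier) : ∃ k, Λ.el k = x :=
  ⟨_, Nat.nth_count (p := (· ∈ Λ.carrier)) hx⟩

theorem count_conductor : Nat.count (· ∈ Λ.carrier) Λ.conductor = Λ.leftCount := by
  rw [Nat.count_eq_card_filter_range, leftCount, ← Set.ncard_coe_finset]
  congr 1
  ext x
  simp [and_comm]

theorem conductor_le_el_of_leftCount_le {i : ℕ} (h : Λ.leftCount ≤ i) :
    Λ.conductor ≤ Λ.el i := by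
  by_contra! hlt
  have := Nat.count_strict_mono (Λ.el_mem i) hlt
  rw [count_el, count_conductor] at this
  omega

theorem el_succ_of_conductor_le {i : ℕ} (h : Λ.conductor ≤ Λ.el i) :
    Λ.el (i + 1) = Λ.el i + 1 := by
  have hcount : Nat.count (· ∈ Λ.carrier) (Λ.el i + 1) = i + 1 := by
    rw [Nat.count_succ_eq_succ_count_iff.2 (Λ.el_mem i), count_el]
  rw [← hcount]
  exact Nat.nth_count (p := (· ∈ Λ.carrier)) (Λ.mem_of_conductor_le (by omega))

end Enumeration

theorem isSeed_iff_of_el_succ_eq_conductor (Λ : NumericalSemigroup) {i x : ℕ}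
    (h : Λ.el (i + 1) = Λ.conductor) :
    Λ.IsSeed i x ↔ Λ.conductor ≤ x ∧ x + Λ.el i < 2 * Λ.conductor := by
  have hright : ∀ j, i < j → Λ.conductor ≤ Λ.el j := fun j hj => h ▸ Λ.el_le_el.2 hj
  constructor
  · rintro ⟨-, hcx, hseed⟩
    refine ⟨hcx, lt_of_not_ge fun hge => ?_⟩
    have hi : Λ.el i < Λ.conductor := h ▸ Λ.el_lt_el.2 (lt_add_one i)
    obtain ⟨k, hk⟩ := Λ.exists_el_eq (Λ.mem_of_conductor_le
      (show Λ.conductor ≤ x + Λ.el i - Λ.conductor by omega))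
    have hik : i + 1 ≤ k := Λ.el_le_el.1 (by omega)
    exact hseed (i + 1) k (by omega) hik (by omega) (by omega)
  · rintro ⟨hcx, hlt⟩
    refine ⟨Λ.mem_of_conductor_le hcx, hcx, fun j k hj hjk _ => ?_⟩
    have := hright j hj
    have := hright k (by omega)
    omega

section RemoveElement

variable {Λ M : NumericalSemigroup} {s : ℕ}

theorem count_add_ite_of_carrier_eq_diff (hM : M.carrier = Λ.carrier \ {Λ.el s}) (n : ℕ) :
    Nat.count (· ∈ M.carrier) n + (if Λ.el s < n then 1 else 0) =
      Nat.count (· ∈ Λ.carrier) n := by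
  induction n with
  | zero => simp
  | succ n ih =>
    rw [Nat.count_succ, Nat.count_succ, ← ih, hM]
    rcases lt_trichotomy (Λ.el s) n with hlt | rfl | hgt
    · simp [hlt, hlt.trans (lt_add_one n), hlt.ne', add_right_comm]
    · simp [Λ.el_mem s]
    · simp [hgt.ne, not_lt.2 hgt.le, not_lt.2 (Nat.succ_le_of_lt hgt)]

theorem el_of_carrier_eq_diff_of_lt (hM : M.carrier = Λ.carrier \ {Λ.el s}) {i : ℕ}
    (hi : i < s) : M.el i = Λ.el i := by
  have hmem : Λ.el i ∈ M.carrier := by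
    rw [hM]
    exact ⟨Λ.el_mem i, (Λ.el_lt_el.2 hi).ne⟩
  have hcount := count_add_ite_of_carrier_eq_diff hM (Λ.el i)
  rw [if_neg (not_lt.2 (Λ.el_le_el.2 hi.le)), count_el, add_zero] at hcount
  rw [← Nat.nth_count hmem, hcount]
  rfl

theorem el_of_carrier_eq_diff_of_le (hM : M.carrier = Λ.carrier \ {Λ.el s}) {i : ℕ}
    (hi : s ≤ i) : M.el i = Λ.el (i + 1) := by
  have hlt : Λ.el s < Λ.el (i + 1) := Λ.el_lt_el.2 (by omega)
  have hmem : Λ.el (i + 1) ∈ M.carrier := by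
    rw [hM]
    exact ⟨Λ.el_mem _, hlt.ne'⟩
  have hcount := count_add_ite_of_carrier_eq_diff hM (Λ.el (i + 1))
  rw [if_pos hlt, count_el, Nat.add_right_cancel_iff] at hcount
  rw [← Nat.nth_count hmem, hcount]
  rfl

theorem conductor_of_carrier_eq_diff (hM : M.carrier = Λ.carrier \ {Λ.el s})
    (hc : Λ.conductor ≤ Λ.el s) : M.conductor = Λ.el s + 1 := by
  have hnot : Λ.el s ∉ M.carrier := by simp [hM]
  refine le_antisymm (M.conductor_le_of_forall fun n hn => ?_) ?_
  · rw [hM]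
    exact ⟨Λ.mem_of_conductor_le (by omega), by simp; omega⟩
  · by_contra! h
    exact hnot (M.mem_of_conductor_le (by omega))

end RemoveElement

end NumericalSemigroup

theorem newOrderSeeds_of_eq_sub_one_general
    (Λ : NumericalSemigroup) (s : ℕ)
    (hL : Λ.leftCount ≤ s - 1) (hs1 : 1 ≤ s)
    (M : NumericalSemigroup) (hM : M.carrier = Λ.carrier \ {Λ.el s}) :
    ∀ x : ℕ, M.IsSeed (s - 1) x ↔ (x = Λ.el s + 1 ∨ x = Λ.el s + 2) := by
  obtain ⟨i, rfl⟩ : ∃ i, s = i + 1 := ⟨s - 1, by omega⟩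
  rw [Nat.add_sub_cancel] at hL ⊢
  have hci := Λ.conductor_le_el_of_leftCount_le hL
  have hsucc := Λ.el_succ_of_conductor_le hci
  have hcs : Λ.conductor ≤ Λ.el (i + 1) := by omega
  have hcond := NumericalSemigroup.conductor_of_carrier_eq_diff hM hcs
  have hMs : M.el (i + 1) = M.conductor := by
    rw [NumericalSemigroup.el_of_carrier_eq_diff_of_le hM le_rfl,
      Λ.el_succ_of_conductor_le hcs, hcond]
  intro x
  rw [M.isSeed_iff_of_el_succ_eq_conductor hMs,
    NumericalSemigroup.el_of_carrier_eq_diff_of_lt hM (lt_add_one i), hcond]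
  omega

/-- New-order seeds, case `i = s - 1`: the order-`(s-1)` seeds of `Λ̃ = Λ \ {λ_s}`
are exactly `λ_s + 1` and `λ_s + 2`. -/
theorem newOrderSeeds_of_eq_sub_one
    (Λ : NumericalSemigroup) (s : ℕ) (hs : Λ.IsRightPrimitive (Λ.el s))
    (hL : Λ.leftCount ≤ s - 1) (hs1 : 1 ≤ s)
    (M : NumericalSemigroup) (hM : M.carrier = Λ.carrier \ {Λ.el s}) :
    ∀ x : ℕ, M.IsSeed (s - 1) x ↔ (x = Λ.el s + 1 ∨ x = Λ.el s + 2) :=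
  newOrderSeeds_of_eq_sub_one_general Λ s hL hs1 M hM
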